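/- arXiv:math/0512554 — 3 statements merged into one kernel-verified Lean document; each statement's English description precedes it below -/
import Mathlib

section
/- For every 0 < λ ≤ 1/2 there exists a constant c_λ > 0 such that for all integers k and 1 ≤ ℓ ≤ k, there exists a set P of ℓ-element subsets of {1,...,k} with log|P| ≥ (1−λ)·ℓ·log(c_λ·k/ℓ), such that any two distinct I, J ∈ P satisfy |I △ J| ≥ λ·ℓ (symmetric difference). -/
set_option maxHeartbeats 1000000
open Finset

namespace PackAux

variable {k ℓ q : ℕ}

lemma emb_lt (h : ℓ * q ≤ k) (i : Fin ℓ) (a : Fin q) : i.1 * q + a.1 < k := by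
  have h1 : i.1 * q + a.1 < (i.1 + 1) * q := by
    have := a.2; nlinarith
  have h2 : (i.1 + 1) * q ≤ ℓ * q := Nat.mul_le_mul_right _ i.2
  exact lt_of_lt_of_le h1 (le_trans h2 h)

lemma emb_inj {i j : Fin ℓ} {a b : Fin q} (h : i.1 * q + a.1 = j.1 * q + b.1) :
    i = j ∧ a = b := by
  have hq : 0 < q := a.pos
  have ha := a.2; have hb := b.2
  have hij : i.1 = j.1 := by
    have h1 : (a.1 + i.1 * q) / q = i.1 := by
      rw [Nat.add_mul_div_right _ _ hq, Nat.div_eq_of_lt ha, Nat.zero_add]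
    have h2 : (b.1 + j.1 * q) / q = j.1 := by
      rw [Nat.add_mul_div_right _ _ hq, Nat.div_eq_of_lt hb, Nat.zero_add]
    rw [← h1, ← h2]; congr 1; omega
  refine ⟨Fin.ext hij, Fin.ext ?_⟩
  have h' := h
  rw [hij] at h'
  omega

def S (h : ℓ * q ≤ k) (f : Fin ℓ → Fin q) : Finset (Fin k) :=
  univ.image fun i => (⟨i.1 * q + (f i).1, emb_lt h i (f i)⟩ : Fin k)

lemma card_S (h : ℓ * q ≤ k) (f : Fin ℓ → Fin q) : (S h f).card = ℓ := by
  rw [S, card_image_of_injective, card_univ, Fintype.card_fin]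
  intro i j hij
  have h' : i.1 * q + (f i).1 = j.1 * q + (f j).1 := congrArg Fin.val hij
  exact (emb_inj h').1

lemma sdiff_S (h : ℓ * q ≤ k) (f g : Fin ℓ → Fin q) :
    S h f \ S h g = ({i | f i ≠ g i} : Finset (Fin ℓ)).image
      (fun i => (⟨i.1 * q + (f i).1, emb_lt h i (f i)⟩ : Fin k)) := by
  ext x
  simp only [mem_sdiff, S, mem_image, mem_filter, mem_univ, true_and]
  constructor
  · rintro ⟨⟨i, rfl⟩, hx⟩
    refine ⟨i, fun he => hx ⟨i, ?_⟩, rfl⟩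
    simp [he]
  · rintro ⟨i, hne, rfl⟩
    refine ⟨⟨i, rfl⟩, ?_⟩
    rintro ⟨j, hj⟩
    have hv : j.1 * q + (g j).1 = i.1 * q + (f i).1 := congrArg Fin.val hj
    obtain ⟨rfl, h2⟩ := emb_inj hv
    exact hne h2.symm

lemma card_sdiff_S (h : ℓ * q ≤ k) (f g : Fin ℓ → Fin q) :
    (S h f \ S h g).card = hammingDist f g := by
  rw [sdiff_S, card_image_of_injOn, hammingDist]
  intro i _ j _ hij
  exact (emb_inj (congrArg Fin.val hij)).1

lemma card_symmDiff_S (h : ℓ * q ≤ k) (f g : Fin ℓ → Fin q) :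
    (symmDiff (S h f) (S h g)).card = 2 * hammingDist f g := by
  rw [symmDiff_def, Finset.sup_eq_union, card_union_of_disjoint disjoint_sdiff_sdiff,
    card_sdiff_S, card_sdiff_S, hammingDist_comm g f]
  omega

lemma S_inj (h : ℓ * q ≤ k) {f g : Fin ℓ → Fin q} (hfg : S h f = S h g) : f = g := by
  have := card_sdiff_S h f g
  rw [hfg, Finset.sdiff_self] at this
  simp only [Finset.bot_eq_empty, card_empty] at this
  exact hammingDist_eq_zero.mp this.symm

lemma ball_card_le (hq : 0 < q) (f : Fin ℓ → Fin q) (t : ℕ) :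
    ({g : Fin ℓ → Fin q | hammingDist f g ≤ t} : Finset _).card ≤ 2 ^ ℓ * q ^ t := by
  classical
  have hsub : ({g : Fin ℓ → Fin q | hammingDist f g ≤ t} : Finset _) ⊆
      ((univ : Finset (Finset (Fin ℓ))).filter fun D => D.card ≤ t).biUnion
        fun D => {g : Fin ℓ → Fin q | ∀ i ∉ D, g i = f i} := by
    intro g hg
    simp only [mem_filter, mem_univ, true_and] at hg
    refine mem_biUnion.mpr ⟨univ.filter fun i => f i ≠ g i, ?_, ?_⟩
    · simp only [mem_filter, mem_univ, true_and]; exact hg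
    · simp only [mem_filter, mem_univ, true_and]
      intro i hi
      exact (not_not.mp hi).symm
  refine (card_le_card hsub).trans ((card_biUnion_le).trans ?_)
  have hbound : ∀ D ∈ (univ : Finset (Finset (Fin ℓ))).filter (fun D => D.card ≤ t),
      ({g : Fin ℓ → Fin q | ∀ i ∉ D, g i = f i} : Finset _).card ≤ q ^ t := by
    intro D hD
    simp only [mem_filter, mem_univ, true_and] at hD
    have hcard : ({g : Fin ℓ → Fin q | ∀ i ∉ D, g i = f i} : Finset _).card ≤ q ^ D.card := by
      have := Finset.card_le_card_of_injOn (f := fun (g : Fin ℓ → Fin q) => fun i (_ : i ∈ D) => g i)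
        (s := {g : Fin ℓ → Fin q | ∀ i ∉ D, g i = f i})
        (t := D.pi fun _ => (univ : Finset (Fin q)))
        (fun g _ => by simp [Finset.mem_pi])
        (by
          intro g1 h1 g2 h2 he
          simp only [mem_coe, mem_filter, mem_univ, true_and] at h1 h2
          funext i
          by_cases hi : i ∈ D
          · exact congrFun (congrFun he i) hi
          · rw [h1 i hi, h2 i hi])
      rwa [Finset.card_pi, Finset.prod_const, card_univ, Fintype.card_fin] at this
    refine hcard.trans ?_
    exact Nat.pow_le_pow_right hq hD
  calc ∑ D ∈ (univ : Finset (Finset (Fin ℓ))).filter (fun D => D.card ≤ t),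
        ({g : Fin ℓ → Fin q | ∀ i ∉ D, g i = f i} : Finset _).card
      ≤ ∑ D ∈ (univ : Finset (Finset (Fin ℓ))).filter (fun D => D.card ≤ t), q ^ t :=
        Finset.sum_le_sum hbound
    _ ≤ 2 ^ ℓ * q ^ t := by
        rw [Finset.sum_const, smul_eq_mul]
        have : ((univ : Finset (Finset (Fin ℓ))).filter (fun D => D.card ≤ t)).card ≤ 2 ^ ℓ := by
          refine (card_filter_le _ _).trans ?_
          simp [card_univ]
        exact Nat.mul_le_mul_right _ this

lemma exists_packing {α : Type*} [Fintype α] [DecidableEq α] (d : α → α → ℕ)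
    (hsymm : ∀ x y, d x y = d y x) (hself : ∀ x, d x x = 0) (r : ℝ) (hr : 0 < r) :
    ∃ P : Finset α, (∀ x ∈ P, ∀ y ∈ P, x ≠ y → r ≤ d x y) ∧
      ∀ g : α, ∃ f ∈ P, (d f g : ℝ) < r := by
  classical
  set G := (univ : Finset (Finset α)).filter
    (fun s => ∀ x ∈ s, ∀ y ∈ s, x ≠ y → r ≤ d x y) with hG
  have hne : G.Nonempty := ⟨∅, by simp [hG]⟩
  obtain ⟨P, hPG, hmax⟩ := Finset.exists_max_image G Finset.card hne
  simp only [hG, mem_filter, mem_univ, true_and] at hPG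
  refine ⟨P, hPG, fun g => ?_⟩
  by_contra hc
  push_neg at hc
  have hgP : g ∉ P := fun hg => by
    have := hc g hg; rw [hself] at this; push_cast at this; linarith
  have hins : insert g P ∈ G := by
    simp only [hG, mem_filter, mem_univ, true_and]
    intro x hx y hy hxy
    rcases Finset.mem_insert.mp hx with hxg | hx
    · rcases Finset.mem_insert.mp hy with hyg | hy
      · exact absurd (hxg.trans hyg.symm) hxy
      · rw [hxg, hsymm]; exact hc y hy
    · rcases Finset.mem_insert.mp hy with hyg | hy
      · rw [hyg]; exact hc x hx
      · exact hPG x hx y hy hxy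
  have := hmax _ hins
  rw [Finset.card_insert_of_notMem hgP] at this
  omega

end PackAux

/-- Packing bound for the Hamming metric on `ℓ`-subsets of `{1,…,k}`:
for `0 < λ ≤ 1/2` there is `c_λ > 0` such that for all `1 ≤ ℓ ≤ k` there is a
family `P` of `ℓ`-element subsets with `log |P| ≥ (1−λ) ℓ log(c_λ k/ℓ)` and
any two distinct members have symmetric difference of size at least `λ ℓ`. -/
theorem packing_subsets :
    ∀ lam : ℝ, 0 < lam → lam ≤ 1 / 2 →
      ∃ c : ℝ, 0 < c ∧
        ∀ k ℓ : ℕ, 1 ≤ ℓ → ℓ ≤ k →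
          ∃ P : Finset (Finset (Fin k)),
            (∀ I ∈ P, I.card = ℓ) ∧
            (1 - lam) * ℓ * Real.log (c * k / ℓ) ≤ Real.log P.card ∧
            ∀ I ∈ P, ∀ J ∈ P, I ≠ J → lam * ℓ ≤ ((symmDiff I J).card : ℝ) := by
  intro lam hlam hlam2
  classical
  have h4 : (1:ℝ) ≤ (4:ℝ) ^ (1/lam) :=
    Real.one_le_rpow (by norm_num) (by positivity)
  refine ⟨(2 * (4:ℝ) ^ (1/lam))⁻¹, by positivity, ?_⟩
  set c : ℝ := (2 * (4:ℝ) ^ (1/lam))⁻¹ with hc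
  have hc_pos : 0 < c := by positivity
  have hc_half : c ≤ 1/2 := by
    rw [hc, inv_le_comm₀ (by positivity) (by norm_num)]
    nlinarith
  intro k ℓ hℓ hℓk
  have hℓpos : (0:ℝ) < ℓ := by exact_mod_cast hℓ
  by_cases hsmall : c * k / ℓ ≤ 1
  · -- trivial case: one set suffices
    obtain ⟨s, -, hs⟩ := Finset.exists_subset_card_eq
      (show ℓ ≤ (univ : Finset (Fin k)).card by simpa using hℓk)
    refine ⟨{s}, by simp [hs], ?_, ?_⟩
    · simp only [card_singleton, Nat.cast_one, Real.log_one]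
      apply mul_nonpos_of_nonneg_of_nonpos
      · have h1 : (0:ℝ) ≤ 1 - lam := by linarith
        positivity
      · exact Real.log_nonpos (by positivity) hsmall
    · intro I hI J hJ hIJ
      simp only [mem_singleton] at hI hJ
      exact absurd (hI.trans hJ.symm) hIJ
  · push_neg at hsmall
    have hkpos : (0:ℝ) < k := by
      have h1 : (1:ℕ) ≤ k := le_trans hℓ hℓk
      exact_mod_cast h1
    set x : ℝ := (k:ℝ) / ℓ with hxdef
    have hx_pos : 0 < x := div_pos hkpos hℓpos
    have hcx : 1 < c * x := by
      have h1 : c * (k:ℝ) / ℓ = c * x := by rw [hxdef]; ring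
      linarith [hsmall, h1.symm.le, h1.le]
    have hx_big : 2 * (4:ℝ) ^ (1/lam) < x := by
      have h2 : c * (2 * (4:ℝ) ^ (1/lam)) = 1 := by
        rw [hc]; field_simp
      nlinarith [hc_pos]
    have hx2 : (2:ℝ) ≤ x := by nlinarith
    set q : ℕ := k / ℓ with hqdef
    have hmul : ℓ * q ≤ k := by rw [hqdef, mul_comm]; exact Nat.div_mul_le_self k ℓ
    have hq_lb : x - 1 < (q:ℝ) := by
      have hk : k < q * ℓ + ℓ := by
        rw [hqdef]; exact Nat.lt_div_mul_add (by omega)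
      have hk' : (k:ℝ) < (q:ℝ) * ℓ + ℓ := by exact_mod_cast hk
      rw [hxdef, sub_lt_iff_lt_add, div_lt_iff₀ hℓpos]
      nlinarith
    have hq_half : x / 2 ≤ (q:ℝ) := by nlinarith
    have hQbig : (4:ℝ) ^ (1/lam) < (q:ℝ) := by nlinarith
    have hQ1 : (1:ℝ) < (q:ℝ) := lt_of_le_of_lt h4 hQbig
    have hq0 : 0 < q := by
      have : (1:ℕ) < q := by exact_mod_cast hQ1
      omega
    have hr : 0 < lam * ℓ / 2 := by positivity
    obtain ⟨P₀, hpack, hcover⟩ := PackAux.exists_packing (α := Fin ℓ → Fin q)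
      hammingDist (fun a b => hammingDist_comm a b) hammingDist_self (lam * ℓ / 2) hr
    set t : ℕ := ⌊lam * ℓ / 2⌋₊ with htdef
    have hcover' : (univ : Finset (Fin ℓ → Fin q)) ⊆
        P₀.biUnion fun f => univ.filter fun g => hammingDist f g ≤ t := by
      intro g _
      obtain ⟨f, hf, hd⟩ := hcover g
      exact mem_biUnion.mpr ⟨f, hf, mem_filter.mpr ⟨mem_univ _, Nat.le_floor hd.le⟩⟩
    have hcount : q ^ ℓ ≤ P₀.card * (2 ^ ℓ * q ^ t) := by
      calc q ^ ℓ = (univ : Finset (Fin ℓ → Fin q)).card := by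
            rw [card_univ, Fintype.card_fun, Fintype.card_fin, Fintype.card_fin]
        _ ≤ (P₀.biUnion fun f => univ.filter fun g => hammingDist f g ≤ t).card :=
            card_le_card hcover'
        _ ≤ ∑ f ∈ P₀, (univ.filter fun g => hammingDist f g ≤ t).card := card_biUnion_le
        _ ≤ ∑ f ∈ P₀, 2 ^ ℓ * q ^ t :=
            Finset.sum_le_sum fun f _ => PackAux.ball_card_le hq0 f t
        _ = P₀.card * (2 ^ ℓ * q ^ t) := by rw [Finset.sum_const, smul_eq_mul]
    have hP0pos : 0 < P₀.card := by
      by_contra h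
      have h0 : P₀.card = 0 := by omega
      rw [h0, zero_mul] at hcount
      have hqq : 0 < q ^ ℓ := pow_pos hq0 ℓ
      omega
    refine ⟨P₀.image (PackAux.S hmul), ?_, ?_, ?_⟩
    · intro I hI
      obtain ⟨f, -, rfl⟩ := mem_image.mp hI
      exact PackAux.card_S hmul f
    · have hcardP : (P₀.image (PackAux.S hmul)).card = P₀.card :=
        card_image_of_injOn fun f _ g _ h => PackAux.S_inj hmul h
      rw [hcardP]
      have hN1 : (1:ℝ) ≤ (P₀.card : ℝ) := by exact_mod_cast hP0pos
      have hNpos : (0:ℝ) < (P₀.card : ℝ) := by linarith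
      have hQpos : (0:ℝ) < (q:ℝ) := by linarith
      have hcount' : (q:ℝ) ^ ℓ ≤ (P₀.card : ℝ) * (2 ^ ℓ * (q:ℝ) ^ t) := by
        exact_mod_cast hcount
      have hlogcount : (ℓ:ℝ) * Real.log q ≤
          Real.log (P₀.card : ℝ) + ((ℓ:ℝ) * Real.log 2 + (t:ℝ) * Real.log q) := by
        have h1 : Real.log ((q:ℝ) ^ ℓ) ≤ Real.log ((P₀.card : ℝ) * (2 ^ ℓ * (q:ℝ) ^ t)) :=
          Real.log_le_log (by positivity) hcount'
        rw [Real.log_pow, Real.log_mul (ne_of_gt hNpos) (by positivity),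
          Real.log_mul (by positivity) (by positivity), Real.log_pow, Real.log_pow] at h1
        linarith
      have hlogQ0 : 0 ≤ Real.log q := Real.log_nonneg hQ1.le
      have hlog2 : 0 ≤ Real.log 2 := Real.log_nonneg one_le_two
      have hlam_logQ : 2 * Real.log 2 ≤ lam * Real.log q := by
        have h1 : Real.log ((4:ℝ) ^ (1/lam)) ≤ Real.log q :=
          Real.log_le_log (by positivity) hQbig.le
        rw [Real.log_rpow (by norm_num)] at h1
        have h4l : Real.log (4:ℝ) = 2 * Real.log 2 := by
          rw [show (4:ℝ) = 2^2 by norm_num, Real.log_pow]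
          push_cast; ring
        rw [h4l] at h1
        have h2 := mul_le_mul_of_nonneg_left h1 hlam.le
        have h3 : lam * (1/lam * (2 * Real.log 2)) = 2 * Real.log 2 := by
          field_simp
        linarith [h2, h3.ge, h3.le]
      have ht : (t:ℝ) ≤ lam * ℓ / 2 := Nat.floor_le hr.le
      have hlogc : Real.log (c * k / ℓ) ≤ Real.log q := by
        apply Real.log_le_log (by positivity)
        have h1 : c * k / ℓ = c * x := by rw [hxdef]; ring
        rw [h1]
        have h2 : c * x ≤ x / 2 := by nlinarith [hc_half, hx_pos]
        linarith [hq_half]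
      have hfac : 0 ≤ (1 - lam) * (ℓ:ℝ) :=
        mul_nonneg (by linarith) hℓpos.le
      have step1 : (1 - lam) * ℓ * Real.log (c * k / ℓ) ≤ (1 - lam) * ℓ * Real.log q :=
        mul_le_mul_of_nonneg_left hlogc hfac
      have hint1 := mul_le_mul_of_nonneg_left hlam_logQ (show 0 ≤ (ℓ:ℝ)/2 by positivity)
      have hint2 := mul_le_mul_of_nonneg_right ht hlogQ0
      linarith [step1, hlogcount, hint1, hint2]
    · intro I hI J hJ hIJ
      obtain ⟨f, hf, rfl⟩ := mem_image.mp hI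
      obtain ⟨g, hg, rfl⟩ := mem_image.mp hJ
      have hfg : f ≠ g := fun h => hIJ (by rw [h])
      have hd := hpack f hf g hg hfg
      rw [PackAux.card_symmDiff_S hmul f g]
      push_cast
      linarith [hd]
end

section
/- There exists an absolute constant c > 0 such that: if ν is a probability measure on ℝ^n supported on the Euclidean ball of radius D (i.e., if Y ∼ ν then ‖Y‖₂ ≤ D almost surely), and E = (ℝ^n, ‖·‖_E) is the normed space with ‖t‖_E = ‖⟨t, Y⟩‖_{ψ_2(ν)}, then the Gaussian mean width ℓ_E = E‖∑_{i=1}^n g_i e_i‖_E satisfies ℓ_E ≤ c·D, where g₁,...,g_n are independent standard Gaussians and (e_i) is the standard basis. -/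
/-!
With `K = 2D` and `Z(t) = E exp (⟨t, Y⟩² / K²) ≥ 1`, convexity of `exp` on `[0, ⟨t, Y⟩² / K²]`
gives `E exp (⟨t, Y⟩² / (K² Z(t))) ≤ 1 + (Z(t) - 1) / Z(t) ≤ 2`, so
`‖t‖_E ≤ K √Z(t) ≤ D (1 + Z(t))`. Averaging over a standard Gaussian `t = G` and exchanging the
integrals, `⟨G, y⟩ ∼ N(0, |y|²)` gives `E_G exp (⟨G, y⟩² / K²) = (1 - 2|y|² / K²)^(-1/2) ≤ √2`
whenever `|y| ≤ D`, hence `ℓ_E ≤ (1 + √2) D`.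
-/

open MeasureTheory ProbabilityTheory Real

/-- The ψ_2(ν) norm of the linear functional `⟨t,·⟩` on `ℝ^n`. -/
noncomputable def psi2LinNorm {n : ℕ} (ν : Measure (Fin n → ℝ)) (t : Fin n → ℝ) : ℝ :=
  sInf {u : ℝ | 0 < u ∧ ∫ y, Real.exp ((∑ i, t i * y i) ^ 2 / u ^ 2) ∂ν ≤ 2}

open scoped NNReal

section GaussianSquareExponential

variable {v : ℝ≥0} {a : ℝ}

lemma gaussianPDFReal_zero_mul_exp_mul_sq (hv : v ≠ 0) (x : ℝ) :
    gaussianPDFReal 0 v x * exp (a * x ^ 2) =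
      (√(2 * π * v))⁻¹ * exp (-((1 - 2 * a * v) / (2 * v)) * x ^ 2) := by
  rw [gaussianPDFReal, mul_assoc, ← exp_add]
  congr 2
  have : (v : ℝ) ≠ 0 := by exact_mod_cast hv
  field_simp
  ring

lemma integrable_exp_mul_sq_gaussianReal (h : 2 * a * v < 1) :
    Integrable (fun x ↦ exp (a * x ^ 2)) (gaussianReal 0 v) := by
  rcases eq_or_ne v 0 with rfl | hv
  · simpa using integrable_dirac (by simp)
  have hb : 0 < (1 - 2 * a * v) / (2 * v) := div_pos (by linarith) (by positivity)
  rw [gaussianReal_of_var_ne_zero _ hv, gaussianPDF_def,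
    integrable_withDensity_iff (by fun_prop) (ae_of_all _ fun _ ↦ ENNReal.ofReal_lt_top)]
  simp_rw [ENNReal.toReal_ofReal (gaussianPDFReal_nonneg _ _ _), mul_comm (exp _),
    gaussianPDFReal_zero_mul_exp_mul_sq hv]
  exact (integrable_exp_neg_mul_sq hb).const_mul _

lemma integral_exp_mul_sq_gaussianReal (h : 2 * a * v < 1) :
    ∫ x, exp (a * x ^ 2) ∂gaussianReal 0 v = (√(1 - 2 * a * v))⁻¹ := by
  rcases eq_or_ne v 0 with rfl | hv
  · simp
  have hb : 0 < 1 - 2 * a * v := by linarith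
  simp_rw [integral_gaussianReal_eq_integral_smul hv, smul_eq_mul,
    gaussianPDFReal_zero_mul_exp_mul_sq hv, integral_const_mul, integral_gaussian,
    ← sqrt_inv]
  rw [← sqrt_mul (inv_nonneg.2 (by positivity))]
  congr 1
  field_simp

end GaussianSquareExponential

section StandardGaussianVector

variable {ι : Type*} [Fintype ι] {a : ℝ} (y : ι → ℝ)

lemma map_pi_gaussianReal_sum_mul :
    (Measure.pi fun _ : ι ↦ gaussianReal 0 1).map (fun g ↦ ∑ i, g i * y i) =
      gaussianReal 0 ⟨∑ i, y i ^ 2, by positivity⟩ := by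
  have hL : (fun g : ι → ℝ ↦ ∑ i, g i * y i) =
      innerSL ℝ (WithLp.toLp 2 y) ∘ WithLp.toLp 2 := by
    ext g
    simp [PiLp.inner_apply, mul_comm]
  rw [hL, ← Measure.map_map (by fun_prop) (by fun_prop), map_pi_eq_stdGaussian,
    IsGaussian.map_eq_gaussianReal, integral_strongDual_stdGaussian, variance_dual_stdGaussian,
    innerSL_apply_norm, EuclideanSpace.real_norm_sq_eq]
  congr
  exact Real.toNNReal_of_nonneg _

variable {y}

lemma integrable_exp_mul_sq_sum_mul_pi_gaussianReal (h : 2 * a * ∑ i, y i ^ 2 < 1) :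
    Integrable (fun g ↦ exp (a * (∑ i, g i * y i) ^ 2))
      (Measure.pi fun _ : ι ↦ gaussianReal 0 1) := by
  have := integrable_exp_mul_sq_gaussianReal (v := ⟨∑ i, y i ^ 2, by positivity⟩) h
  rwa [← map_pi_gaussianReal_sum_mul, integrable_map_measure (by fun_prop)
    (by fun_prop : Measurable fun g : ι → ℝ ↦ ∑ i, g i * y i).aemeasurable] at this

lemma integral_exp_mul_sq_sum_mul_pi_gaussianReal (h : 2 * a * ∑ i, y i ^ 2 < 1) :
    ∫ g, exp (a * (∑ i, g i * y i) ^ 2) ∂(Measure.pi fun _ : ι ↦ gaussianReal 0 1) =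
      (√(1 - 2 * a * ∑ i, y i ^ 2))⁻¹ := by
  have := integral_exp_mul_sq_gaussianReal (v := ⟨∑ i, y i ^ 2, by positivity⟩) h
  rwa [← map_pi_gaussianReal_sum_mul, integral_map
    (by fun_prop : Measurable fun g : ι → ℝ ↦ ∑ i, g i * y i).aemeasurable
    (by fun_prop)] at this

end StandardGaussianVector

lemma exp_div_le_one_add_exp_sub_one_div {x Z : ℝ} (hZ : 1 ≤ Z) :
    exp (x / Z) ≤ 1 + (exp x - 1) / Z := by
  have hZ₀ : 0 < Z := by linarith
  have h := convexOn_exp.2 (Set.mem_univ 0) (Set.mem_univ x)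
    (sub_nonneg.2 (inv_le_one_of_one_le₀ hZ)) (inv_nonneg.2 hZ₀.le) (sub_add_cancel 1 Z⁻¹)
  simp only [smul_eq_mul, mul_zero, zero_add, exp_zero, mul_one] at h
  calc exp (x / Z) = exp (Z⁻¹ * x) := by rw [div_eq_inv_mul]
  _ ≤ 1 - Z⁻¹ + Z⁻¹ * exp x := h
  _ = 1 + (exp x - 1) / Z := by ring

section SubGaussianNorm

variable {Ω : Type*} [MeasurableSpace Ω] {μ : Measure Ω} [IsProbabilityMeasure μ]
  {f : Ω → ℝ} {K : ℝ}

lemma one_le_integral_exp_sq_div (hint : Integrable (fun ω ↦ exp (f ω ^ 2 / K ^ 2)) μ) :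
    1 ≤ ∫ ω, exp (f ω ^ 2 / K ^ 2) ∂μ := by
  calc (1 : ℝ) = ∫ _, 1 ∂μ := by simp
  _ ≤ _ := integral_mono (integrable_const 1) hint fun ω ↦ one_le_exp (by positivity)

lemma integral_exp_sq_div_mul_integral_le_two
    (hint : Integrable (fun ω ↦ exp (f ω ^ 2 / K ^ 2)) μ) :
    ∫ ω, exp (f ω ^ 2 / (K ^ 2 * ∫ ω', exp (f ω' ^ 2 / K ^ 2) ∂μ)) ∂μ ≤ 2 := by
  set Z := ∫ ω, exp (f ω ^ 2 / K ^ 2) ∂μ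
  have hZ : 1 ≤ Z := one_le_integral_exp_sq_div hint
  have hexcess : Integrable (fun ω ↦ (exp (f ω ^ 2 / K ^ 2) - 1) / Z) μ :=
    (hint.sub (integrable_const 1)).div_const Z
  calc ∫ ω, exp (f ω ^ 2 / (K ^ 2 * Z)) ∂μ
      ≤ ∫ ω, (1 + (exp (f ω ^ 2 / K ^ 2) - 1) / Z) ∂μ := by
        refine integral_mono_of_nonneg (ae_of_all _ fun ω ↦ (exp_pos _).le)
          ((integrable_const 1).add hexcess) (ae_of_all _ fun ω ↦ ?_)
        dsimp only
        rw [← div_div]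
        exact exp_div_le_one_add_exp_sub_one_div hZ
  _ = 1 + (Z - 1) / Z := by
        rw [integral_add (integrable_const 1) hexcess, integral_div,
          integral_sub hint (integrable_const 1)]
        simp [Z]
  _ ≤ 2 := by
        have : (Z - 1) / Z ≤ 1 := div_le_one_of_le₀ (by linarith) (by linarith)
        linarith

end SubGaussianNorm

lemma psi2LinNorm_nonneg {n : ℕ} (ν : Measure (Fin n → ℝ)) (t : Fin n → ℝ) :
    0 ≤ psi2LinNorm ν t :=
  Real.sInf_nonneg fun _ hu ↦ hu.1.le

lemma psi2LinNorm_le_mul_sqrt_integral {n : ℕ} {ν : Measure (Fin n → ℝ)}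
    [IsProbabilityMeasure ν] {t : Fin n → ℝ} {K : ℝ} (hK : 0 < K)
    (hint : Integrable (fun y ↦ exp ((∑ i, t i * y i) ^ 2 / K ^ 2)) ν) :
    psi2LinNorm ν t ≤ K * √(∫ y, exp ((∑ i, t i * y i) ^ 2 / K ^ 2) ∂ν) := by
  have hZ := one_le_integral_exp_sq_div hint
  refine csInf_le ⟨0, fun _ hu ↦ hu.1.le⟩ ⟨by positivity, ?_⟩
  rw [mul_pow, sq_sqrt (by linarith)]
  exact integral_exp_sq_div_mul_integral_le_two hint

section BoundedSupport

variable {ι : Type*} [Fintype ι] {ν : Measure (ι → ℝ)} {D : ℝ}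

lemma integrable_exp_sq_sum_mul_div_sq [IsFiniteMeasure ν]
    (hsupp : ∀ᵐ y ∂ν, ∑ i, y i ^ 2 ≤ D ^ 2) (t : ι → ℝ) (K : ℝ) :
    Integrable (fun y ↦ exp ((∑ i, t i * y i) ^ 2 / K ^ 2)) ν := by
  have hcont : Continuous fun y : ι → ℝ ↦ exp ((∑ i, t i * y i) ^ 2 / K ^ 2) := by fun_prop
  refine (integrable_const (exp ((∑ i, t i ^ 2) * D ^ 2 / K ^ 2))).mono'
    hcont.aestronglyMeasurable (hsupp.mono fun y hy ↦ ?_)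
  rw [norm_of_nonneg (exp_pos _).le, exp_le_exp]
  gcongr
  exact (Finset.sum_mul_sq_le_sq_mul_sq _ t y).trans (by gcongr)

lemma integral_exp_sq_sum_mul_div_pi_gaussianReal_le (hD : 0 < D) {y : ι → ℝ}
    (hy : ∑ i, y i ^ 2 ≤ D ^ 2) :
    Integrable (fun g ↦ exp ((∑ i, g i * y i) ^ 2 / (2 * D) ^ 2))
        (Measure.pi fun _ : ι ↦ gaussianReal 0 1) ∧
      ∫ g, exp ((∑ i, g i * y i) ^ 2 / (2 * D) ^ 2)
        ∂(Measure.pi fun _ : ι ↦ gaussianReal 0 1) ≤ √2 := by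
  have hlt : 2 * ((2 * D) ^ 2)⁻¹ * ∑ i, y i ^ 2 ≤ 1 / 2 := by
    rw [mul_pow, ← div_eq_mul_inv, div_mul_eq_mul_div, div_le_iff₀ (by positivity)]
    nlinarith
  simp_rw [div_eq_inv_mul _ ((2 * D) ^ 2)]
  refine ⟨integrable_exp_mul_sq_sum_mul_pi_gaussianReal (by linarith), ?_⟩
  rw [integral_exp_mul_sq_sum_mul_pi_gaussianReal (by linarith), ← sqrt_inv]
  gcongr
  rw [inv_le_comm₀ (by linarith) (by norm_num)]
  linarith

lemma integral_pi_gaussianReal_integral_exp_sq_sum_mul_div_le [IsProbabilityMeasure ν]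
    (hD : 0 < D) (hsupp : ∀ᵐ y ∂ν, ∑ i, y i ^ 2 ≤ D ^ 2) :
    Integrable (fun g ↦ ∫ y, exp ((∑ i, g i * y i) ^ 2 / (2 * D) ^ 2) ∂ν)
        (Measure.pi fun _ : ι ↦ gaussianReal 0 1) ∧
      ∫ g, ∫ y, exp ((∑ i, g i * y i) ^ 2 / (2 * D) ^ 2) ∂ν
        ∂(Measure.pi fun _ : ι ↦ gaussianReal 0 1) ≤ √2 := by
  set γ := Measure.pi fun _ : ι ↦ gaussianReal 0 1
  have hcont : Continuous fun p : (ι → ℝ) × (ι → ℝ) ↦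
      exp ((∑ i, p.1 i * p.2 i) ^ 2 / (2 * D) ^ 2) := by fun_prop
  have hF : Integrable (fun p : (ι → ℝ) × (ι → ℝ) ↦
      exp ((∑ i, p.1 i * p.2 i) ^ 2 / (2 * D) ^ 2)) (γ.prod ν) := by
    refine (integrable_prod_iff' hcont.aestronglyMeasurable).2
      ⟨hsupp.mono fun y hy ↦ (integral_exp_sq_sum_mul_div_pi_gaussianReal_le hD hy).1, ?_⟩
    refine (integrable_const √2).mono'
      (hcont.norm.stronglyMeasurable.integral_prod_left' (μ := γ)).aestronglyMeasurable
      (hsupp.mono fun y hy ↦ ?_)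
    simp_rw [norm_of_nonneg (exp_pos _).le]
    rw [norm_of_nonneg (integral_nonneg fun _ ↦ (exp_pos _).le)]
    exact (integral_exp_sq_sum_mul_div_pi_gaussianReal_le hD hy).2
  refine ⟨hF.integral_prod_left, ?_⟩
  rw [integral_integral_swap hF]
  calc ∫ y, ∫ g, exp ((∑ i, g i * y i) ^ 2 / (2 * D) ^ 2) ∂γ ∂ν ≤ ∫ _, √2 ∂ν :=
        integral_mono_of_nonneg (ae_of_all _ fun _ ↦ integral_nonneg fun _ ↦ (exp_pos _).le)
          (integrable_const _)
          (hsupp.mono fun y hy ↦ (integral_exp_sq_sum_mul_div_pi_gaussianReal_le hD hy).2)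
  _ = √2 := by simp

end BoundedSupport

lemma psi2LinNorm_le_of_ae_sum_sq_le {n : ℕ} {ν : Measure (Fin n → ℝ)}
    [IsProbabilityMeasure ν] {D : ℝ} (hD : 0 < D) (hsupp : ∀ᵐ y ∂ν, ∑ i, y i ^ 2 ≤ D ^ 2)
    (t : Fin n → ℝ) :
    psi2LinNorm ν t ≤ D * (1 + ∫ y, exp ((∑ i, t i * y i) ^ 2 / (2 * D) ^ 2) ∂ν) := by
  set Z := ∫ y, exp ((∑ i, t i * y i) ^ 2 / (2 * D) ^ 2) ∂ν
  have hZ : 0 ≤ Z := integral_nonneg fun _ ↦ (exp_pos _).le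
  calc psi2LinNorm ν t ≤ 2 * D * √Z :=
        psi2LinNorm_le_mul_sqrt_integral (by positivity)
          (integrable_exp_sq_sum_mul_div_sq hsupp t _)
  _ ≤ D * (1 + Z) := by
        have hamgm : 2 * √Z ≤ 1 + Z := by simpa [sq_sqrt hZ] using two_mul_le_add_sq 1 √Z
        linarith [mul_le_mul_of_nonneg_left hamgm hD.le]

/-- There is an absolute constant `c > 0` such that if `ν` is a probability
measure on `ℝ^n` supported in the Euclidean ball of radius `D`, then the
Gaussian mean width of the ψ_2(ν) norm satisfies `ℓ_E ≤ c D`. -/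
theorem gaussian_mean_width_psi2 :
    ∃ c : ℝ, 0 < c ∧
      ∀ (n : ℕ) (ν : Measure (Fin n → ℝ)), IsProbabilityMeasure ν →
        ∀ D : ℝ, 0 < D →
        (∀ᵐ y ∂ν, Real.sqrt (∑ i, y i ^ 2) ≤ D) →
        (∀ t : Fin n → ℝ,
          {u : ℝ | 0 < u ∧ ∫ y, Real.exp ((∑ i, t i * y i) ^ 2 / u ^ 2) ∂ν ≤ 2}.Nonempty) →
        ∫ g, psi2LinNorm ν g ∂(Measure.pi fun _ : Fin n => gaussianReal 0 1) ≤
          c * D := by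
  refine ⟨1 + √2, by positivity, fun n ν _ D hD hsupp _ ↦ ?_⟩
  have hsupp' : ∀ᵐ y ∂ν, ∑ i, y i ^ 2 ≤ D ^ 2 :=
    hsupp.mono fun _ ↦ (sqrt_le_left hD.le).1
  obtain ⟨hZ, hZ_le⟩ := integral_pi_gaussianReal_integral_exp_sq_sum_mul_div_le hD hsupp'
  calc ∫ g, psi2LinNorm ν g ∂(Measure.pi fun _ : Fin n => gaussianReal 0 1)
      ≤ ∫ g, D * (1 + ∫ y, exp ((∑ i, g i * y i) ^ 2 / (2 * D) ^ 2) ∂ν)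
          ∂(Measure.pi fun _ : Fin n => gaussianReal 0 1) :=
        integral_mono_of_nonneg (ae_of_all _ (psi2LinNorm_nonneg ν))
          (((integrable_const 1).add hZ).const_mul D)
          (ae_of_all _ (psi2LinNorm_le_of_ae_sum_sq_le hD hsupp'))
  _ = D * (1 + ∫ g, ∫ y, exp ((∑ i, g i * y i) ^ 2 / (2 * D) ^ 2) ∂ν
          ∂(Measure.pi fun _ : Fin n => gaussianReal 0 1)) := by
        rw [integral_const_mul, integral_add (integrable_const 1) hZ]
        simp
  _ ≤ (1 + √2) * D := by
        rw [mul_comm (1 + √2)]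
        gcongr
end

section
/- Let Y be an exponential random variable and for each n let X^{(n)} = ∑_{i=1}^n (Y_i/√(log(i+1)))·e_i ∈ ℝ^n where Y₁,...,Y_n are independent copies of Y. Then there exists a constant c₄ > 0 (independent of n) such that with probability at least c₄, sup_{t ∈ B₁^n} ⟨t, X^{(n)}⟩ ≥ √(log(n+1)), where B₁^n is the unit ball of ℓ₁^n. -/
/-!
Pick the unit vector `t = eᵢ`: the supremum is at least `Yᵢ / √(log (i+2))`, and since
`i + 2 ≤ n + 1` this is at least `√(log (n+1))` as soon as `Yᵢ > log (n+1)`. Each coordinate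
exceeds `log (n+1)` with probability `1/(n+1)`, independently, so some coordinate does with
probability `1 - (1 - 1/(n+1))ⁿ ≥ 1 - e^{-n/(n+1)} ≥ 1 - e^{-1/2}`.
-/

open MeasureTheory ProbabilityTheory Real

section L1Ball

variable {ι : Type*} [Fintype ι]

lemma bddAbove_range_l1Ball_inner (x : ι → ℝ) :
    BddAbove (Set.range fun t : {t : ι → ℝ // ∑ i, |t i| ≤ 1} => ∑ i, t.1 i * x i) := by
  refine ⟨∑ i, |x i|, ?_⟩
  rintro _ ⟨t, rfl⟩
  refine Finset.sum_le_sum fun i _ => ?_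
  have hti : |t.1 i| ≤ 1 :=
    (Finset.single_le_sum (fun j _ => abs_nonneg (t.1 j)) (Finset.mem_univ i)).trans t.2
  calc t.1 i * x i ≤ |t.1 i * x i| := le_abs_self _
    _ = |t.1 i| * |x i| := abs_mul _ _
    _ ≤ |x i| := mul_le_of_le_one_left (abs_nonneg _) hti

lemma le_iSup_l1Ball_inner [DecidableEq ι] (x : ι → ℝ) (i : ι) :
    x i ≤ ⨆ t : {t : ι → ℝ // ∑ i, |t i| ≤ 1}, ∑ j, t.1 j * x j := by
  have hsingle : ∑ j, |(Pi.single i 1 : ι → ℝ) j| ≤ 1 := by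
    simp [Pi.single_apply, apply_ite abs]
  refine le_ciSup_of_le (bddAbove_range_l1Ball_inner x) ⟨Pi.single i 1, hsingle⟩ ?_
  simp [Pi.single_apply]

end L1Ball

lemma expMeasure_Iic {r : ℝ} (hr : 0 < r) {a : ℝ} (ha : 0 ≤ a) :
    expMeasure r (Set.Iic a) = ENNReal.ofReal (1 - exp (-(r * a))) := by
  have := isProbabilityMeasure_expMeasure hr
  rw [← ofReal_cdf, cdf_expMeasure_eq hr, if_pos ha]

lemma measureReal_pi_expMeasure_exists_lt {ι : Type*} [Fintype ι] {r : ℝ} (hr : 0 < r) {a : ℝ}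
    (ha : 0 ≤ a) :
    (Measure.pi fun _ : ι => expMeasure r).real {y | ∃ i, a < y i} =
      1 - (1 - exp (-(r * a))) ^ Fintype.card ι := by
  have := isProbabilityMeasure_expMeasure hr
  have hcompl : {y : ι → ℝ | ∃ i, a < y i} = (Set.univ.pi fun _ => Set.Iic a)ᶜ := by
    ext y
    simp only [Set.mem_ofPred_eq, Set.mem_compl_iff, Set.mem_univ_pi, Set.mem_Iic, not_forall,
      not_le]
  have hexp : exp (-(r * a)) ≤ 1 := exp_le_one_iff.mpr (by nlinarith)
  rw [hcompl, probReal_compl_eq_one_sub (MeasurableSet.univ_pi fun _ => measurableSet_Iic),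
    measureReal_def, Measure.pi_pi, expMeasure_Iic hr ha, Finset.prod_const, Finset.card_univ,
    ENNReal.toReal_pow, ENNReal.toReal_ofReal (by linarith)]

lemma one_sub_inv_succ_pow_le_exp {n : ℕ} (hn : 1 ≤ n) :
    (1 - ((n : ℝ) + 1)⁻¹) ^ n ≤ exp (-(1 / 2)) := by
  have hn' : (1 : ℝ) ≤ n := by exact_mod_cast hn
  have hinv_le_one : ((n : ℝ) + 1)⁻¹ ≤ 1 := inv_le_one_of_one_le₀ (by linarith)
  have hhalf : (1 : ℝ) / 2 ≤ n * ((n : ℝ) + 1)⁻¹ := by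
    rw [← div_eq_mul_inv, le_div_iff₀ (by positivity)]
    linarith
  calc (1 - ((n : ℝ) + 1)⁻¹) ^ n ≤ exp (-((n : ℝ) + 1)⁻¹) ^ n :=
        pow_le_pow_left₀ (by linarith) (one_sub_le_exp_neg _) n
    _ = exp (-(n * ((n : ℝ) + 1)⁻¹)) := by rw [← exp_nat_mul, mul_neg]
    _ ≤ exp (-(1 / 2)) := exp_le_exp.mpr (by linarith)

lemma sqrt_le_div_sqrt_of_le {a b y : ℝ} (hb : 0 < b) (hba : b ≤ a) (hay : a ≤ y) :
    √a ≤ y / √b := by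
  have hsqrt_b : 0 < √b := sqrt_pos.mpr hb
  calc √a = a / √a := div_sqrt.symm
    _ ≤ a / √b := div_le_div_of_nonneg_left (hb.le.trans hba) hsqrt_b (sqrt_le_sqrt hba)
    _ ≤ y / √b := div_le_div_of_nonneg_right hay hsqrt_b.le

/-- For `X^{(n)} = ∑ᵢ Yᵢ/√(log(i+1)) eᵢ` with `Yᵢ` i.i.d. standard exponential,
there is `c₄ > 0` independent of `n` such that with probability at least `c₄`,
`sup_{t ∈ B₁^n} ⟨t, X^{(n)}⟩ ≥ √(log(n+1))`. -/
theorem exponential_sup_lower :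
    ∃ c₄ : ℝ, 0 < c₄ ∧
      ∀ n : ℕ, 1 ≤ n →
        c₄ ≤ ((Measure.pi fun _ : Fin n => ProbabilityTheory.expMeasure 1)
          {y : Fin n → ℝ |
            Real.sqrt (Real.log (n + 1)) ≤
              ⨆ t : {t : Fin n → ℝ // ∑ i, |t i| ≤ 1},
                ∑ i, t.1 i * (y i / Real.sqrt (Real.log ((i : ℕ) + 1 + 1)))}).toReal := by
  refine ⟨1 - exp (-(1 / 2)), by linarith [exp_lt_one_iff.mpr (by norm_num : -(1 / 2 : ℝ) < 0)],
    fun n hn => ?_⟩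
  have := isProbabilityMeasure_expMeasure one_pos
  have hlog_nonneg : 0 ≤ log (n + 1) := log_nonneg (by linarith [n.cast_nonneg (α := ℝ)])
  have hsub : {y : Fin n → ℝ | ∃ i, log (n + 1) < y i} ⊆ {y : Fin n → ℝ |
      √(log (n + 1)) ≤ ⨆ t : {t : Fin n → ℝ // ∑ i, |t i| ≤ 1},
        ∑ i, t.1 i * (y i / √(log ((i : ℕ) + 1 + 1)))} := by
    rintro y ⟨i, hi⟩
    have hi_le : ((i : ℕ) : ℝ) + 1 + 1 ≤ n + 1 := by exact_mod_cast Nat.succ_le_succ i.2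
    refine (sqrt_le_div_sqrt_of_le (log_pos (by linarith [Nat.cast_nonneg (α := ℝ) (i : ℕ)]))
      (log_le_log (by positivity) hi_le) hi.le).trans ?_
    exact le_iSup_l1Ball_inner (fun j : Fin n => y j / √(log ((j : ℕ) + 1 + 1))) i
  calc 1 - exp (-(1 / 2)) ≤ 1 - (1 - exp (-(1 * log (n + 1)))) ^ n := by
        rw [one_mul, exp_neg (log _), exp_log (by positivity)]
        linarith [one_sub_inv_succ_pow_le_exp hn]
    _ = _ := by rw [measureReal_pi_expMeasure_exists_lt one_pos hlog_nonneg, Fintype.card_fin]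
    _ ≤ _ := measureReal_mono hsub
end
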